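/- arXiv:2103.01550 — 6 statements merged into one kernel-verified Lean document; each statement's English description precedes it below -/
import Mathlib

section
/- Fix a binary training set (x_1,y_1),…,(x_n,y_n) with labels y_i ∈ {−1,+1} and at least one example from each class, and assume the feature map h renders the data linearly separable, i.e. there exists w with y_i⟨w, h(x_i)⟩ ≥ 1 for all i ∈ [n]. Fix parameters Δ_+, Δ_− > 0, ω_+, ω_− ≥ 0 not both zero (with ω_{y_i} > 0 for all occurring labels) and ι_+, ι_− ∈ ℝ, and consider the VS-loss L(w) = Σ_{i=1}^n ω_{y_i} log(1 + e^{ι_{y_i}} e^{−Δ_{y_i} y_i ⟨w, h(x_i)⟩}). For each R > 0 let w_R be a minimizer of L over the ball {w : ‖w‖₂ ≤ R}, and let ŵ_δ be the solution of the CS-SVM problem with margin ratio δ = Δ_−/Δ_+: minimize ‖w‖₂ subject to ⟨w, h(x_i)⟩ ≥ δ whenever y_i = +1 and ⟨w, h(x_i)⟩ ≤ −1 whenever y_i = −1. Then lim_{R→∞} w_R/‖w_R‖₂ = ŵ_δ/‖ŵ_δ‖₂. -/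
open Filter
open scoped RealInnerProductSpace Topology

open Real Metric

/-! Put `v i = Δ_{y i} y i h (x i)`. The CS-SVM constraints become `Δm ≤ ⟪w, v i⟫`, so `wδ` is the
hard-margin SVM solution for the points `v i` and `u⋆ = wδ / ‖wδ‖` has the maximal margin
`γ = Δm / ‖wδ‖`; the VS-loss of example `i` is a function of `⟪w, v i⟫` with exponential tails.
Comparing with `R • u⋆` gives `L (wR R) ≤ C e^{-Rγ}`, and the lower tails then force every margin of
`wR R` to be at least `Rγ - K`. As `wδ` is the minimal-norm point of a convex set,
`‖wδ‖² ≤ ⟪wδ, w⟫` for every feasible `w`; applied to a rescaling of `wR R` this gives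
`⟪u⋆, wR R⟫ ≥ R - K / γ`, whence `‖wR R / ‖wR R‖ - u⋆‖² ≤ 2K / (γR) → 0`. -/

lemma min_one_div_two_le_log_one_add {s : ℝ} (hs : 0 ≤ s) : min 1 s / 2 ≤ log (1 + s) := by
  refine le_trans ?_ (le_log_one_add_of_nonneg hs)
  rw [le_div_iff₀ (by linarith)]
  rcases le_total s 1 with h | h
  · rw [min_eq_right h]; nlinarith
  · rw [min_eq_left h]; linarith

lemma min_one_mul_min_one_le {a b : ℝ} (ha : 0 ≤ a) (hb : 0 ≤ b) :
    min 1 a * min 1 b ≤ min 1 (a * b) :=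
  le_min (mul_le_one₀ (min_le_left _ _) (by positivity) (min_le_left _ _))
    (mul_le_mul (min_le_right _ _) (min_le_right _ _) (by positivity) ha)

lemma sub_log_div_le_of_mul_min_le {c B s t : ℝ} (hc : 0 < c)
    (h : c * min 1 (exp (-t)) ≤ B * exp (-s)) (hB : B * exp (-s) < c) : s - log (B / c) ≤ t := by
  have hexp : c * exp (-t) ≤ B * exp (-s) := by
    rcases min_choice 1 (exp (-t)) with h1 | h1
    · rw [h1, mul_one] at h; linarith
    · rwa [h1] at h
  have hB0 : 0 < B := pos_of_mul_pos_left ((by positivity : 0 < c * exp (-t)).trans_le hexp)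
    (exp_pos _).le
  have hlog := log_le_log (by positivity) hexp
  rw [log_mul hc.ne' (exp_pos _).ne', log_mul hB0.ne' (exp_pos _).ne', log_exp, log_exp] at hlog
  rw [log_div hB0.ne' hc.ne']
  linarith

def HasExpTails (f : ℝ → ℝ) : Prop :=
  (∃ C, ∀ t, f t ≤ C * exp (-t)) ∧ ∃ c > 0, ∀ t, c * min 1 (exp (-t)) ≤ f t

-- The VS-loss of an example, as a function of its scaled signed score `t = Δ_y y ⟪w, h x⟫`.
noncomputable def vsLoss (ω b t : ℝ) : ℝ := ω * log (1 + exp b * exp (-t))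

lemma hasExpTails_vsLoss {ω : ℝ} (hω : 0 < ω) (b : ℝ) : HasExpTails (vsLoss ω b) := by
  refine ⟨⟨ω * exp b, fun t => ?_⟩, ⟨ω * min 1 (exp b) / 2, by positivity, fun t => ?_⟩⟩
  · rw [vsLoss, mul_assoc]
    exact mul_le_mul_of_nonneg_left (log_le_sub_one_of_pos (by positivity) |>.trans_eq
      (by ring)) hω.le
  · calc ω * min 1 (exp b) / 2 * min 1 (exp (-t))
        = ω * (min 1 (exp b) * min 1 (exp (-t)) / 2) := by ring
      _ ≤ ω * (min 1 (exp b * exp (-t)) / 2) := by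
          gcongr
          exact min_one_mul_min_one_le (exp_pos b).le (exp_pos _).le
      _ ≤ vsLoss ω b t := mul_le_mul_of_nonneg_left
          (min_one_div_two_le_log_one_add (by positivity)) hω.le

lemma csSVM_constraint_iff {y a Δp Δm : ℝ} (hy : y = 1 ∨ y = -1) (hΔp : 0 < Δp) (hΔm : 0 < Δm) :
    ((y = 1 → Δm / Δp ≤ a) ∧ (y = -1 → a ≤ -1)) ↔
      Δm ≤ (if y = 1 then Δp else Δm) * (y * a) := by
  rcases hy with rfl | rfl
  · norm_num [div_le_iff₀ hΔp, mul_comm]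
  · simp only [show (-1 : ℝ) ≠ 1 by norm_num, if_false, false_imp_iff, true_and, forall_const]
    constructor <;> intro h <;> nlinarith

section MaxMargin

variable {E : Type*} [NormedAddCommGroup E] [InnerProductSpace ℝ E]

lemma norm_sq_le_inner_of_isMinOn_norm {K : Set E} (hK : Convex ℝ K) {w₀ : E} (hw₀ : w₀ ∈ K)
    (hmin : IsMinOn (‖·‖) K w₀) {w : E} (hw : w ∈ K) : ‖w₀‖ ^ 2 ≤ ⟪w₀, w⟫ := by
  have : Nonempty K := ⟨⟨w₀, hw₀⟩⟩
  have hinf : ‖0 - w₀‖ = ⨅ w : K, ‖0 - (w : E)‖ := by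
    refine le_antisymm (le_ciInf fun w => ?_) (ciInf_le ⟨0, ?_⟩ (⟨w₀, hw₀⟩ : K))
    · simpa using isMinOn_iff.1 hmin w w.2
    · rintro _ ⟨w, rfl⟩; exact norm_nonneg _
  have := (norm_eq_iInf_iff_real_inner_le_zero hK hw₀).1 hinf w hw
  rw [zero_sub, inner_neg_left, inner_sub_right, real_inner_self_eq_norm_sq] at this
  linarith

lemma norm_inv_smul_sub_sq_le {u w : E} {R D : ℝ} (hu : ‖u‖ = 1) (hw : ‖w‖ ≤ R) (hDR : D < R)
    (hwu : R - D ≤ ⟪u, w⟫) : ‖‖w‖⁻¹ • w - u‖ ^ 2 ≤ 2 * D / R := by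
  have hw0 : 0 < ‖w‖ := by
    by_contra! h
    rw [norm_le_zero_iff.1 h, inner_zero_right] at hwu
    linarith
  have hR : 0 < R := hw0.trans_le hw
  have key : 1 - D / R ≤ ⟪u, w⟫ / ‖w‖ :=
    calc 1 - D / R = (R - D) / R := by rw [sub_div, div_self hR.ne']
      _ ≤ ⟪u, w⟫ / R := by gcongr
      _ ≤ ⟪u, w⟫ / ‖w‖ := div_le_div_of_nonneg_left (by linarith) hw0 hw
  rw [norm_sub_sq_real, norm_smul, norm_inv, norm_norm, inv_mul_cancel₀ hw0.ne', hu,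
    real_inner_smul_left, real_inner_comm, ← div_eq_inv_mul, mul_div_assoc]
  linarith

variable {ι : Type*}

def svmFeasibleSet (v : ι → E) (κ : ℝ) : Set E := {w | ∀ i, κ ≤ ⟪w, v i⟫}

lemma convex_svmFeasibleSet (v : ι → E) (κ : ℝ) : Convex ℝ (svmFeasibleSet v κ) := by
  intro x hx y hy a b ha hb hab i
  have hκ : κ = a * κ + b * κ := by rw [← add_mul, hab, one_mul]
  rw [inner_add_left, real_inner_smul_left, real_inner_smul_left]
  nlinarith [mul_le_mul_of_nonneg_left (hx i) ha, mul_le_mul_of_nonneg_left (hy i) hb]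

-- Quantitative uniqueness of the max-margin direction: `(κ / μ) • w` is feasible.
lemma mul_norm_sq_le_inner_of_le_inner {v : ι → E} {κ μ : ℝ} (hκ : 0 ≤ κ) (hμ : 0 < μ) {w₀ : E}
    (hw₀ : w₀ ∈ svmFeasibleSet v κ) (hmin : IsMinOn (‖·‖) (svmFeasibleSet v κ) w₀) {w : E}
    (hw : ∀ i, μ ≤ ⟪w, v i⟫) : μ * ‖w₀‖ ^ 2 ≤ κ * ⟪w₀, w⟫ := by
  have hscaled : (κ / μ) • w ∈ svmFeasibleSet v κ := fun i => by
    rw [real_inner_smul_left, div_mul_eq_mul_div, le_div_iff₀ hμ]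
    exact mul_le_mul_of_nonneg_left (hw i) hκ
  have := norm_sq_le_inner_of_isMinOn_norm (convex_svmFeasibleSet v κ) hw₀ hmin hscaled
  rw [real_inner_smul_right, div_mul_eq_mul_div, le_div_iff₀ hμ] at this
  linarith

variable [Fintype ι]

lemma eventually_sub_le_inner_of_isMinOn {v : ι → E} {ℓ : ι → ℝ → ℝ}
    (hℓ : ∀ i, HasExpTails (ℓ i)) {u : E} (hu : ‖u‖ ≤ 1) {γ : ℝ} (hγ : 0 < γ)
    (hγu : ∀ i, γ ≤ ⟪u, v i⟫) {wR : ℝ → E}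
    (hwR : ∀ R > 0, IsMinOn (fun w => ∑ i, ℓ i ⟪w, v i⟫) (closedBall 0 R) (wR R)) :
    ∃ K, ∀ᶠ R in atTop, ∀ i, R * γ - K ≤ ⟪wR R, v i⟫ := by
  choose C hC using fun i => (hℓ i).1
  choose c hc hlow using fun i => (hℓ i).2
  have hC0 : ∀ i, 0 ≤ C i := fun i => by
    have := (hlow i 0).trans (hC i 0)
    simp only [neg_zero, exp_zero, min_self, mul_one] at this
    linarith [hc i]
  have hℓ0 : ∀ i t, 0 ≤ ℓ i t := fun i t => le_trans (by positivity [hc i]) (hlow i t)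
  set A := ∑ i, C i
  have hloss : ∀ R > 0, ∑ i, ℓ i ⟪wR R, v i⟫ ≤ A * exp (-(R * γ)) := fun R hR =>
    calc ∑ i, ℓ i ⟪wR R, v i⟫ ≤ ∑ i, ℓ i ⟪R • u, v i⟫ := isMinOn_iff.1 (hwR R hR) _ <| by
          rw [mem_closedBall_zero_iff, norm_smul, norm_of_nonneg hR.le]
          exact mul_le_of_le_one_right hR.le hu
      _ ≤ ∑ i, C i * exp (-⟪R • u, v i⟫) := Finset.sum_le_sum fun i _ => hC i _
      _ ≤ ∑ i, C i * exp (-(R * γ)) := by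
          gcongr with i
          · exact hC0 i
          · rw [real_inner_smul_left]
            exact mul_le_mul_of_nonneg_left (hγu i) hR.le
      _ = A * exp (-(R * γ)) := by rw [Finset.sum_mul]
  have hsmall : ∀ i, ∀ᶠ R in atTop, A * exp (-(R * γ)) < c i := fun i => by
    have : Tendsto (fun R => A * exp (-(R * γ))) atTop (𝓝 0) := by
      simpa using (tendsto_exp_neg_atTop_nhds_zero.comp
        (tendsto_id.atTop_mul_const hγ)).const_mul A
    exact this.eventually (gt_mem_nhds (hc i))
  obtain ⟨K, hK⟩ := Finite.exists_le fun i => log (A / c i)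
  refine ⟨K, ?_⟩
  filter_upwards [eventually_all.2 hsmall, eventually_gt_atTop 0] with R hRsmall hR i
  have hterm : ℓ i ⟪wR R, v i⟫ ≤ A * exp (-(R * γ)) :=
    (Finset.single_le_sum (f := fun j => ℓ j ⟪wR R, v j⟫) (fun j _ => hℓ0 j _)
      (Finset.mem_univ i)).trans (hloss R hR)
  linarith [sub_log_div_le_of_mul_min_le (hc i) ((hlow i _).trans hterm) (hRsmall i), hK i]

theorem tendsto_normalize_of_isMinOn_closedBall [Nonempty ι] {v : ι → E} {ℓ : ι → ℝ → ℝ}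
    (hℓ : ∀ i, HasExpTails (ℓ i)) {κ : ℝ} (hκ : 0 < κ) {w₀ : E}
    (hw₀ : w₀ ∈ svmFeasibleSet v κ) (hmin : IsMinOn (‖·‖) (svmFeasibleSet v κ) w₀)
    {wR : ℝ → E} (hwR : ∀ R > 0,
      wR R ∈ closedBall 0 R ∧ IsMinOn (fun w => ∑ i, ℓ i ⟪w, v i⟫) (closedBall 0 R) (wR R)) :
    Tendsto (fun R => ‖wR R‖⁻¹ • wR R) atTop (𝓝 (‖w₀‖⁻¹ • w₀)) := by
  obtain ⟨i₀⟩ := ‹Nonempty ι›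
  have hs : 0 < ‖w₀‖ := norm_pos_iff.2 fun h0 => by
    have := hw₀ i₀
    rw [h0, inner_zero_left] at this
    linarith
  set s := ‖w₀‖
  set u := s⁻¹ • w₀
  have hu : ‖u‖ = 1 := by rw [norm_smul, norm_inv, norm_norm, inv_mul_cancel₀ hs.ne']
  have hγu : ∀ i, κ / s ≤ ⟪u, v i⟫ := fun i => by
    rw [real_inner_smul_left, div_eq_inv_mul]
    exact mul_le_mul_of_nonneg_left (hw₀ i) (by positivity)
  obtain ⟨K, hK⟩ := eventually_sub_le_inner_of_isMinOn hℓ hu.le (by positivity) hγu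
    fun R hR => (hwR R hR).2
  set D := K * s / κ with hD
  have hbound : ∀ᶠ R in atTop, ‖‖wR R‖⁻¹ • wR R - u‖ ≤ √(2 * D / R) := by
    filter_upwards [hK, eventually_gt_atTop D, eventually_gt_atTop 0] with R hmargin hDR hR
    have hμ : 0 < R * (κ / s) - K := by
      rw [div_lt_iff₀ hκ] at hDR
      rw [sub_pos, mul_div_assoc', lt_div_iff₀ hs]
      linarith
    refine le_sqrt_of_sq_le (norm_inv_smul_sub_sq_le hu (mem_closedBall_zero_iff.1 (hwR R hR).1)
      hDR ?_)
    have := mul_norm_sq_le_inner_of_le_inner hκ.le hμ hw₀ hmin hmargin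
    have e : s * (R - D) = (R * (κ / s) - K) * s ^ 2 / κ := by rw [hD]; field_simp
    rw [real_inner_smul_left, le_inv_mul_iff₀ hs, e, div_le_iff₀ hκ]
    linarith
  rw [tendsto_iff_norm_sub_tendsto_zero]
  refine squeeze_zero' (Eventually.of_forall fun _ => norm_nonneg _) hbound ?_
  simpa using ((tendsto_const_nhds (x := 2 * D)).div_atTop tendsto_id).sqrt

end MaxMargin

theorem stmt0_general {X : Type*} {n p : ℕ}
    (x : Fin n → X) (y : Fin n → ℝ) (h : X → EuclideanSpace ℝ (Fin p))
    (hy : ∀ i, y i = 1 ∨ y i = -1)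
    (hpos : ∃ i, y i = 1)
    (Δp Δm ωp ωm ιp ιm : ℝ)
    (hΔp : 0 < Δp) (hΔm : 0 < Δm)
    (hωocc : ∀ i, 0 < if y i = 1 then ωp else ωm)
    (L : EuclideanSpace ℝ (Fin p) → ℝ)
    (hL : ∀ w, L w = ∑ i, (if y i = 1 then ωp else ωm) *
      Real.log (1 + Real.exp (if y i = 1 then ιp else ιm) *
        Real.exp (-(if y i = 1 then Δp else Δm) * (y i * ⟪w, h (x i)⟫))))
    (wR : ℝ → EuclideanSpace ℝ (Fin p))
    (hwR : ∀ R > (0:ℝ), ‖wR R‖ ≤ R ∧ ∀ w, ‖w‖ ≤ R → L (wR R) ≤ L w)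
    (δ : ℝ) (hδ : δ = Δm / Δp)
    (wδ : EuclideanSpace ℝ (Fin p))
    (hfeas : (∀ i, y i = 1 → δ ≤ ⟪wδ, h (x i)⟫) ∧ ∀ i, y i = -1 → ⟪wδ, h (x i)⟫ ≤ -1)
    (hopt : ∀ w : EuclideanSpace ℝ (Fin p),
      ((∀ i, y i = 1 → δ ≤ ⟪w, h (x i)⟫) ∧ ∀ i, y i = -1 → ⟪w, h (x i)⟫ ≤ -1) →
      ‖wδ‖ ≤ ‖w‖) :
    Tendsto (fun R => ‖wR R‖⁻¹ • wR R) atTop (𝓝 (‖wδ‖⁻¹ • wδ)) := by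
  obtain ⟨i₀, -⟩ := hpos
  have : Nonempty (Fin n) := ⟨i₀⟩
  subst hδ
  set v : Fin n → EuclideanSpace ℝ (Fin p) :=
    fun i => ((if y i = 1 then Δp else Δm) * y i) • h (x i) with hv
  have hinner : ∀ w i, ⟪w, v i⟫ = (if y i = 1 then Δp else Δm) * (y i * ⟪w, h (x i)⟫) :=
    fun w i => by rw [hv, real_inner_smul_right, mul_assoc]
  have hfeasible : ∀ w, ((∀ i, y i = 1 → Δm / Δp ≤ ⟪w, h (x i)⟫) ∧
      ∀ i, y i = -1 → ⟪w, h (x i)⟫ ≤ -1) ↔ w ∈ svmFeasibleSet v Δm := fun w => by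
    simp only [← forall_and, svmFeasibleSet, Set.mem_ofPred_eq, hinner]
    exact forall_congr' fun i => csSVM_constraint_iff (hy i) hΔp hΔm
  have hloss : ∀ w, L w = ∑ i, vsLoss (if y i = 1 then ωp else ωm) (if y i = 1 then ιp else ιm)
      ⟪w, v i⟫ := fun w => by simp only [hL, vsLoss, hinner, neg_mul]
  refine tendsto_normalize_of_isMinOn_closedBall
    (fun i => hasExpTails_vsLoss (hωocc i) (if y i = 1 then ιp else ιm)) hΔm
    ((hfeasible wδ).1 hfeas) (fun w hw => hopt w ((hfeasible w).2 hw)) fun R hR => ?_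
  refine ⟨mem_closedBall_zero_iff.2 (hwR R hR).1, isMinOn_iff.2 fun w hw => ?_⟩
  simpa only [← hloss] using (hwR R hR).2 w (mem_closedBall_zero_iff.1 hw)

theorem stmt0 {X : Type*} {n p : ℕ}
    (x : Fin n → X) (y : Fin n → ℝ) (h : X → EuclideanSpace ℝ (Fin p))
    (hy : ∀ i, y i = 1 ∨ y i = -1)
    (hpos : ∃ i, y i = 1) (hneg : ∃ i, y i = -1)
    (hsep : ∃ w : EuclideanSpace ℝ (Fin p), ∀ i, 1 ≤ y i * ⟪w, h (x i)⟫)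
    (Δp Δm ωp ωm ιp ιm : ℝ)
    (hΔp : 0 < Δp) (hΔm : 0 < Δm)
    (hωp : 0 ≤ ωp) (hωm : 0 ≤ ωm) (hω0 : ¬(ωp = 0 ∧ ωm = 0))
    (hωocc : ∀ i, 0 < if y i = 1 then ωp else ωm)
    (L : EuclideanSpace ℝ (Fin p) → ℝ)
    (hL : ∀ w, L w = ∑ i, (if y i = 1 then ωp else ωm) *
      Real.log (1 + Real.exp (if y i = 1 then ιp else ιm) *
        Real.exp (-(if y i = 1 then Δp else Δm) * (y i * ⟪w, h (x i)⟫))))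
    (wR : ℝ → EuclideanSpace ℝ (Fin p))
    (hwR : ∀ R > (0:ℝ), ‖wR R‖ ≤ R ∧ ∀ w, ‖w‖ ≤ R → L (wR R) ≤ L w)
    (δ : ℝ) (hδ : δ = Δm / Δp)
    (wδ : EuclideanSpace ℝ (Fin p))
    (hfeas : (∀ i, y i = 1 → δ ≤ ⟪wδ, h (x i)⟫) ∧ ∀ i, y i = -1 → ⟪wδ, h (x i)⟫ ≤ -1)
    (hopt : ∀ w : EuclideanSpace ℝ (Fin p),
      ((∀ i, y i = 1 → δ ≤ ⟪w, h (x i)⟫) ∧ ∀ i, y i = -1 → ⟪w, h (x i)⟫ ≤ -1) →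
      ‖wδ‖ ≤ ‖w‖) :
    Tendsto (fun R => ‖wR R‖⁻¹ • wR R) atTop (𝓝 (‖wδ‖⁻¹ • wδ)) :=
  stmt0_general x y h hy hpos Δp Δm ωp ωm ιp ιm hΔp hΔm hωocc L hL wR hwR δ hδ wδ hfeas hopt
end

section
/- Let x_1,…,x_n ∈ ℝ^d with labels y_i ∈ {−1,+1} be such that the hard-margin SVM with intercept is feasible, and let (ŵ₁, b̂₁) be its solution: minimize ‖w‖₂ over (w,b) subject to y_i(⟨x_i, w⟩ + b) ≥ 1 for all i ∈ [n]. Fix any δ > 0 and define ŵ_δ := ((δ+1)/2)·ŵ₁ and b̂_δ := ((δ+1)/2)·b̂₁ + (δ−1)/2. Then (ŵ_δ, b̂_δ) is an optimal solution of the CS-SVM with intercept and margin-ratio δ: minimize ‖w‖₂ over (w,b) subject to ⟨x_i, w⟩ + b ≥ δ whenever y_i = +1 and ⟨x_i, w⟩ + b ≤ −1 whenever y_i = −1. -/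
/-!
The affine substitution `(w, b) ↦ (c • w, c * b + (δ - 1) / 2)` with `c = (δ + 1) / 2 > 0` sends the
score `s = ⟪x, w⟫ + b` to `c * s + (δ - 1) / 2`, an increasing affine map sending `1 ↦ δ` and
`-1 ↦ -1`. Hence it is a bijection from the SVM-feasible pairs onto the CS-SVM-feasible pairs, and
it multiplies `‖w‖` by the constant `c`, so it maps minimizers to minimizers.
-/

open scoped RealInnerProductSpace

section MarginRatio

variable {ι E : Type*} [NormedAddCommGroup E] [InnerProductSpace ℝ E]

def SVMFeasible (x : ι → E) (y : ι → ℝ) (w : E) (b : ℝ) : Prop :=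
  ∀ i, 1 ≤ y i * (⟪x i, w⟫ + b)

def CSSVMFeasible (δ : ℝ) (x : ι → E) (y : ι → ℝ) (w : E) (b : ℝ) : Prop :=
  (∀ i, y i = 1 → δ ≤ ⟪x i, w⟫ + b) ∧ (∀ i, y i = -1 → ⟪x i, w⟫ + b ≤ -1)

theorem one_le_label_mul_iff {δ t s : ℝ} (hδ : -1 < δ) (ht : t = 1 ∨ t = -1) :
    1 ≤ t * s ↔
      (t = 1 → δ ≤ (δ + 1) / 2 * s + (δ - 1) / 2) ∧
      (t = -1 → (δ + 1) / 2 * s + (δ - 1) / 2 ≤ -1) := by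
  have hc : 0 < (δ + 1) / 2 := by linarith
  rcases ht with rfl | rfl
  · exact ⟨fun h => ⟨fun _ => by nlinarith, fun h' => by norm_num at h'⟩,
      fun h => by nlinarith [h.1 rfl]⟩
  · exact ⟨fun h => ⟨fun h' => by norm_num at h', fun _ => by nlinarith⟩,
      fun h => by nlinarith [h.2 rfl]⟩

theorem svmFeasible_iff_csSVMFeasible {δ : ℝ} (hδ : -1 < δ) {x : ι → E} {y : ι → ℝ}
    (hy : ∀ i, y i = 1 ∨ y i = -1) (w : E) (b : ℝ) :
    SVMFeasible x y w b ↔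
      CSSVMFeasible δ x y (((δ + 1) / 2) • w) ((δ + 1) / 2 * b + (δ - 1) / 2) := by
  have hscore : ∀ i, ⟪x i, ((δ + 1) / 2) • w⟫ + ((δ + 1) / 2 * b + (δ - 1) / 2) =
      (δ + 1) / 2 * (⟪x i, w⟫ + b) + (δ - 1) / 2 := fun i => by
    rw [real_inner_smul_right]; ring
  simp only [SVMFeasible, CSSVMFeasible, hscore, ← forall_and]
  exact forall_congr' fun i => one_le_label_mul_iff hδ (hy i)

end MarginRatio

theorem stmt5 {n d : ℕ}
    (x : Fin n → EuclideanSpace ℝ (Fin d)) (y : Fin n → ℝ)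
    (hy : ∀ i, y i = 1 ∨ y i = -1)
    (w1 : EuclideanSpace ℝ (Fin d)) (b1 : ℝ)
    (hfeas : ∀ i, 1 ≤ y i * (⟪x i, w1⟫ + b1))
    (hopt : ∀ (w : EuclideanSpace ℝ (Fin d)) (b : ℝ),
      (∀ i, 1 ≤ y i * (⟪x i, w⟫ + b)) → ‖w1‖ ≤ ‖w‖)
    (δ : ℝ) (hδ : 0 < δ) :
    ((∀ i, y i = 1 →
        δ ≤ ⟪x i, ((δ + 1) / 2) • w1⟫ + (((δ + 1) / 2) * b1 + (δ - 1) / 2)) ∧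
     (∀ i, y i = -1 →
        ⟪x i, ((δ + 1) / 2) • w1⟫ + (((δ + 1) / 2) * b1 + (δ - 1) / 2) ≤ -1)) ∧
    ∀ (w : EuclideanSpace ℝ (Fin d)) (b : ℝ),
      ((∀ i, y i = 1 → δ ≤ ⟪x i, w⟫ + b) ∧ (∀ i, y i = -1 → ⟪x i, w⟫ + b ≤ -1)) →
      ‖((δ + 1) / 2) • w1‖ ≤ ‖w‖ := by
  set c := (δ + 1) / 2
  have hc : 0 < c := by positivity
  have hfeasible := svmFeasible_iff_csSVMFeasible (δ := δ) (x := x) (by linarith) hy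
  refine ⟨(hfeasible w1 b1).1 hfeas, fun w b hw => ?_⟩
  have hpreimage :
      CSSVMFeasible δ x y (c • c⁻¹ • w) (c * (c⁻¹ * (b - (δ - 1) / 2)) + (δ - 1) / 2) := by
    rwa [smul_inv_smul₀ hc.ne', mul_inv_cancel_left₀ hc.ne', sub_add_cancel]
  have hle := hopt _ _ ((hfeasible _ _).2 hpreimage)
  calc ‖c • w1‖ = c * ‖w1‖ := by rw [norm_smul, Real.norm_of_nonneg hc.le]
    _ ≤ c * ‖c⁻¹ • w‖ := by gcongr
    _ = ‖w‖ := by rw [norm_smul, norm_inv, Real.norm_of_nonneg hc.le, mul_inv_cancel_left₀ hc.ne']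
end

section
/- Let x_1,…,x_n ∈ ℝ^d (n ≥ 1) with labels y_i ∈ {−1,+1} be linearly separable, let ω_i > 0, Δ_i > 0, ι_i ∈ ℝ, and let L(w) = Σ_{i=1}^n ω_i log(1 + e^{ι_i} e^{−Δ_i y_i ⟨x_i, w⟩}). Then for every R > 0, every minimizer w_R of L over the closed ball {w : ‖w‖₂ ≤ R} lies on the boundary: ‖w_R‖₂ = R. -/
/-!
Along the separating direction `v` every margin `yᵢ⟪xᵢ, w⟫` strictly increases, and each summand
of the VS-loss is strictly decreasing in its margin, so `L (w + t • v) < L w` for every `t > 0`.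
An interior point of the ball can be moved a little along `v` without leaving the ball, hence it
is not a minimizer.
-/

open scoped RealInnerProductSpace

theorem exists_pos_norm_add_smul_le {E : Type*} [SeminormedAddCommGroup E] [NormedSpace ℝ E]
    {w : E} {R : ℝ} (h : ‖w‖ < R) (v : E) : ∃ t : ℝ, 0 < t ∧ ‖w + t • v‖ ≤ R := by
  have hv : 0 < ‖v‖ + 1 := by positivity
  have ht : 0 < (R - ‖w‖) / (‖v‖ + 1) := div_pos (by linarith) hv
  refine ⟨(R - ‖w‖) / (‖v‖ + 1), ht, ?_⟩
  calc ‖w + ((R - ‖w‖) / (‖v‖ + 1)) • v‖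
      ≤ ‖w‖ + (R - ‖w‖) / (‖v‖ + 1) * ‖v‖ := by
        grw [norm_add_le, norm_smul, Real.norm_of_nonneg ht.le]
    _ ≤ ‖w‖ + (R - ‖w‖) / (‖v‖ + 1) * (‖v‖ + 1) := by gcongr; linarith
    _ = R := by rw [div_mul_cancel₀ _ hv.ne']; ring

theorem norm_eq_of_forall_le_of_descent_direction {E : Type*} [SeminormedAddCommGroup E]
    [NormedSpace ℝ E] {f : E → ℝ} {v : E} (hv : ∀ w, ∀ t : ℝ, 0 < t → f (w + t • v) < f w)
    {R : ℝ} {w : E} (hw : ‖w‖ ≤ R) (hmin : ∀ u, ‖u‖ ≤ R → f w ≤ f u) : ‖w‖ = R := by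
  refine hw.eq_or_lt.resolve_right fun hlt => ?_
  obtain ⟨t, ht, htR⟩ := exists_pos_norm_add_smul_le hlt v
  exact (hmin _ htR).not_gt (hv w t ht)

theorem strictAnti_mul_log_one_add_mul_exp {ω Δ : ℝ} (hω : 0 < ω) (hΔ : 0 < Δ) (c : ℝ) :
    StrictAnti fun m => ω * Real.log (1 + Real.exp c * Real.exp (-Δ * m)) := by
  intro a b hab
  have hexp : Real.exp (-Δ * b) < Real.exp (-Δ * a) := Real.exp_lt_exp.mpr (by nlinarith)
  have hc := Real.exp_pos c
  exact mul_lt_mul_of_pos_left (Real.log_lt_log (by positivity) (by gcongr)) hω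

theorem sum_comp_margin_add_smul_lt {ι E : Type*} [Fintype ι] [Nonempty ι]
    [NormedAddCommGroup E] [InnerProductSpace ℝ E] (x : ι → E) (y : ι → ℝ) {g : ι → ℝ → ℝ}
    (hg : ∀ i, StrictAnti (g i)) {v : E} (hv : ∀ i, 0 < y i * ⟪x i, v⟫) (w : E) {t : ℝ}
    (ht : 0 < t) : ∑ i, g i (y i * ⟪x i, w + t • v⟫) < ∑ i, g i (y i * ⟪x i, w⟫) := by
  refine Finset.sum_lt_sum_of_nonempty Finset.univ_nonempty fun i _ => hg i ?_
  have := mul_pos ht (hv i)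
  rw [inner_add_right, real_inner_smul_right]
  linarith

theorem stmt7_general {n d : ℕ} (hn : 1 ≤ n)
    (x : Fin n → EuclideanSpace ℝ (Fin d)) (y : Fin n → ℝ)
    (hsep : ∃ w : EuclideanSpace ℝ (Fin d), ∀ i, 1 ≤ y i * ⟪x i, w⟫)
    (ω Δ ι : Fin n → ℝ) (hω : ∀ i, 0 < ω i) (hΔ : ∀ i, 0 < Δ i)
    (L : EuclideanSpace ℝ (Fin d) → ℝ)
    (hL : ∀ w, L w = ∑ i, ω i *
      Real.log (1 + Real.exp (ι i) * Real.exp (-(Δ i) * (y i * ⟪x i, w⟫)))) :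
    ∀ R > (0:ℝ), ∀ wR : EuclideanSpace ℝ (Fin d),
      ‖wR‖ ≤ R → (∀ w, ‖w‖ ≤ R → L wR ≤ L w) → ‖wR‖ = R := by
  intro R _ wR hwR hmin
  have : Nonempty (Fin n) := ⟨⟨0, hn⟩⟩
  obtain ⟨v, hv⟩ := hsep
  refine norm_eq_of_forall_le_of_descent_direction (v := v) (fun w t ht => ?_) hwR hmin
  simp only [hL]
  exact sum_comp_margin_add_smul_lt x y
    (g := fun i m => ω i * Real.log (1 + Real.exp (ι i) * Real.exp (-(Δ i) * m)))
    (fun i => strictAnti_mul_log_one_add_mul_exp (hω i) (hΔ i) (ι i))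
    (fun i => one_pos.trans_le (hv i)) w ht

theorem stmt7 {n d : ℕ} (hn : 1 ≤ n)
    (x : Fin n → EuclideanSpace ℝ (Fin d)) (y : Fin n → ℝ)
    (hy : ∀ i, y i = 1 ∨ y i = -1)
    (hsep : ∃ w : EuclideanSpace ℝ (Fin d), ∀ i, 1 ≤ y i * ⟪x i, w⟫)
    (ω Δ ι : Fin n → ℝ) (hω : ∀ i, 0 < ω i) (hΔ : ∀ i, 0 < Δ i)
    (L : EuclideanSpace ℝ (Fin d) → ℝ)
    (hL : ∀ w, L w = ∑ i, ω i *
      Real.log (1 + Real.exp (ι i) * Real.exp (-(Δ i) * (y i * ⟪x i, w⟫)))) :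
    ∀ R > (0:ℝ), ∀ wR : EuclideanSpace ℝ (Fin d),
      ‖wR‖ ≤ R → (∀ w, ‖w‖ ≤ R → L wR ≤ L w) → ‖wR‖ = R :=
  stmt7_general hn x y hsep ω Δ ι hω hΔ L hL
end

section
/- Let Q(t) := P(Z > t) for Z standard normal. Fix a, b ∈ ℝ and c > 0 with a + b ≥ 0, a − b + 2c > 0 and b − a + 2c > 0, and define g : (0, ∞) → ℝ by g(δ) = Q(a + ((δ−1)/(δ+1))·c) + Q(b − ((δ−1)/(δ+1))·c). Set δ* := (b − a + 2c)/(a − b + 2c). Then δ* > 0, g(δ) ≥ g(δ*) for every δ > 0, g(δ*) = 2·Q((a + b)/2), and the two summands of g are equal at δ*: Q(a + ((δ*−1)/(δ*+1))·c) = Q(b − ((δ*−1)/(δ*+1))·c) = Q((a+b)/2). -/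
open MeasureTheory ProbabilityTheory

/-- The standard normal tail function `Q(t) = P(Z > t)`, `Z ∼ N(0,1)`. -/
noncomputable def gaussQ (t : ℝ) : ℝ := ((gaussianReal 0 1) {x : ℝ | t < x}).toReal

lemma pdf_even (x : ℝ) : gaussianPDFReal 0 1 (-x) = gaussianPDFReal 0 1 x := by
  simp [gaussianPDFReal, neg_sq]

lemma pdf_anti {x y : ℝ} (h : x ^ 2 ≤ y ^ 2) :
    gaussianPDFReal 0 1 y ≤ gaussianPDFReal 0 1 x := by
  simp only [gaussianPDFReal, sub_zero, NNReal.coe_one, mul_one]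
  refine mul_le_mul_of_nonneg_left (Real.exp_le_exp.2 (by linarith)) (by positivity)

lemma gaussQ_eq (s t : ℝ) (h : s ≤ t) :
    gaussQ s = gaussQ t + ∫ x in s..t, gaussianPDFReal 0 1 x := by
  have hint : ∀ u : Set ℝ, MeasurableSet u →
      ((gaussianReal 0 1) u).toReal = ∫ x in u, gaussianPDFReal 0 1 x := by
    intro u hu
    rw [gaussianReal_apply_eq_integral 0 one_ne_zero u,
      ENNReal.toReal_ofReal (setIntegral_nonneg hu fun x _ => gaussianPDFReal_nonneg 0 1 x)]
  have hIoi : ∀ r : ℝ, {x : ℝ | r < x} = Set.Ioi r := fun r => rfl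
  have hsplit : Set.Ioi s = Set.Ioc s t ∪ Set.Ioi t := (Set.Ioc_union_Ioi_eq_Ioi h).symm
  unfold gaussQ
  rw [hIoi, hIoi, hsplit]
  rw [hint _ ((measurableSet_Ioc).union measurableSet_Ioi),
    hint _ measurableSet_Ioi,
    setIntegral_union (Set.Ioc_disjoint_Ioi le_rfl) measurableSet_Ioi
      ((integrable_gaussianPDFReal 0 1).integrableOn)
      ((integrable_gaussianPDFReal 0 1).integrableOn),
    intervalIntegral.integral_of_le h]
  ring

lemma key_ineq {m : ℝ} (hm : 0 ≤ m) (t : ℝ) (ht : 0 ≤ t) :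
    2 * gaussQ m ≤ gaussQ (m - t) + gaussQ (m + t) := by
  have h1 : gaussQ (m - t) = gaussQ m + ∫ x in (m - t)..m, gaussianPDFReal 0 1 x :=
    gaussQ_eq _ _ (by linarith)
  have h2 : gaussQ m = gaussQ (m + t) + ∫ x in m..(m + t), gaussianPDFReal 0 1 x :=
    gaussQ_eq _ _ (by linarith)
  have hR : (∫ x in (m - t)..m, gaussianPDFReal 0 1 x)
      = ∫ x in (-m)..(t - m), gaussianPDFReal 0 1 x := by
    have h := intervalIntegral.integral_comp_neg (a := -m) (b := t - m)
      (fun x => gaussianPDFReal 0 1 x)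
    simp only [pdf_even] at h
    norm_num at h
    exact h.symm
  have hL : (∫ x in m..(m + t), gaussianPDFReal 0 1 x)
      = ∫ x in (-m)..(t - m), gaussianPDFReal 0 1 (x + 2 * m) := by
    rw [intervalIntegral.integral_comp_add_right (fun x => gaussianPDFReal 0 1 x)]
    norm_num
    ring_nf
  have hcomp : (∫ x in (-m)..(t - m), gaussianPDFReal 0 1 (x + 2 * m))
      ≤ ∫ x in (-m)..(t - m), gaussianPDFReal 0 1 x := by
    apply intervalIntegral.integral_mono_on (by linarith)
    · exact ((integrable_gaussianPDFReal 0 1).comp_add_right (2 * m)).intervalIntegrable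
    · exact (integrable_gaussianPDFReal 0 1).intervalIntegrable
    · intro x hx
      apply pdf_anti
      nlinarith [hx.1]
  linarith [hR ▸ hL ▸ hcomp]

theorem stmt13 (a b c : ℝ) (hc : 0 < c) (hab : 0 ≤ a + b)
    (h1 : 0 < a - b + 2 * c) (h2 : 0 < b - a + 2 * c)
    (g : ℝ → ℝ)
    (hg : ∀ δ, g δ = gaussQ (a + ((δ - 1) / (δ + 1)) * c) + gaussQ (b - ((δ - 1) / (δ + 1)) * c))
    (δs : ℝ) (hδs : δs = (b - a + 2 * c) / (a - b + 2 * c)) :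
    0 < δs ∧
    (∀ δ : ℝ, 0 < δ → g δs ≤ g δ) ∧
    g δs = 2 * gaussQ ((a + b) / 2) ∧
    gaussQ (a + ((δs - 1) / (δs + 1)) * c) = gaussQ ((a + b) / 2) ∧
    gaussQ (b - ((δs - 1) / (δs + 1)) * c) = gaussQ ((a + b) / 2) := by
  have hδpos : 0 < δs := hδs ▸ div_pos h2 h1
  have hδ1 : δs + 1 ≠ 0 := by positivity
  have hr : (δs - 1) / (δs + 1) * c = (b - a) / 2 := by
    rw [div_mul_eq_mul_div, div_eq_div_iff hδ1 two_ne_zero, hδs]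
    field_simp
    ring
  have ha : a + (δs - 1) / (δs + 1) * c = (a + b) / 2 := by rw [hr]; ring
  have hb : b - (δs - 1) / (δs + 1) * c = (a + b) / 2 := by rw [hr]; ring
  have hgδs : g δs = 2 * gaussQ ((a + b) / 2) := by
    rw [hg, ha, hb]; ring
  refine ⟨hδpos, ?_, hgδs, by rw [ha], by rw [hb]⟩
  intro δ hδ
  rw [hgδs, hg δ]
  set r := (δ - 1) / (δ + 1) * c with hrdef
  set m := (a + b) / 2 with hmdef
  have hm : 0 ≤ m := by positivity
  set t := (a - b) / 2 + r with htdef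
  have haa : a + r = m + t := by rw [htdef, hmdef]; ring
  have hbb : b - r = m - t := by rw [htdef, hmdef]; ring
  rw [haa, hbb]
  rcases le_or_gt 0 t with hts | hts
  · have := key_ineq hm t hts
    linarith
  · have := key_ineq hm (-t) (by linarith)
    rw [sub_neg_eq_add, ← sub_eq_add_neg] at this
    linarith
end

section
/- Fix δ > 0, γ > 0, π ∈ (0,1), r ∈ {1,2}, an r×r diagonal positive-definite matrix S, and V ∈ ℝ^{2×r} with VᵀV = I_r. Let G ∼ N(0,1) and let Y be an independent random sign with P(Y = +1) = π; set E_Y := e₁·1{Y=+1} − e₂·1{Y=−1} ∈ ℝ² and Δ_Y := δ·1{Y=+1} + 1·1{Y=−1}. Define η_δ(q, ρ, b) := E[( G + E_YᵀVSρ + (bY − Δ_Y)/q )₋²] − (1 − ‖ρ‖₂²)·γ for q > 0, ρ ∈ ℝ^r with ‖ρ‖₂ ≤ 1, and b ∈ ℝ, where (x)₋ := min{x, 0}. Then the function f(q) := inf_{b ∈ ℝ, ‖ρ‖₂ ≤ 1} η_δ(q, ρ, b) is strictly decreasing on (0, ∞). -/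
open MeasureTheory ProbabilityTheory Matrix

/-- Negative part `(x)₋ = min(x, 0)`. -/
noncomputable def negp (x : ℝ) : ℝ := min x 0

/-- The standard Gaussian measure on `ℝ`. -/
noncomputable def stdGauss : Measure ℝ := gaussianReal 0 1

/-!
Substituting `w := -(VSρ)₁ + (-b - 1)/q` for `b` turns the infimum defining `f q` into
`Φ((1 + δ)/q)`, where `Φ(τ) = inf_{ρ, w} π J(d ρ - τ - w) + (1 - π) J w - c ρ` with
`J c = E[(G + c)₋²]`, `d ρ = (VSρ)₀ - (VSρ)₁` and `c ρ = (1 - ‖ρ‖²) γ`. Since `q ↦ (1 + δ)/q`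
is strictly decreasing it suffices that `Φ` is strictly increasing. Raising `τ` by `t > 0` at a
fixed `(ρ, w)` raises the value by at least `π (J x - J (x + t))` at `x = d ρ - τ - w`, and this
gain is bounded below by a positive constant as long as `x` stays bounded above. It does along
near-minimisers: `J` blows up at `-∞`, so `w` stays bounded below, and `d` is bounded on the
compact unit ball.
-/

open Filter Set

lemma negp_sq_antitone : Antitone fun x => negp x ^ 2 := fun x y hxy => by
  have h : min x 0 ≤ min y 0 := min_le_min_right 0 hxy
  have h0 : min y 0 ≤ 0 := min_le_right _ _
  unfold negp
  nlinarith

section NegSqMoment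

variable {μ : Measure ℝ}

noncomputable def negSqMoment (μ : Measure ℝ) (c : ℝ) : ℝ := ∫ x, negp (x + c) ^ 2 ∂μ

lemma negSqMoment_nonneg (c : ℝ) : 0 ≤ negSqMoment μ c :=
  integral_nonneg fun _ => sq_nonneg _

variable [IsFiniteMeasure μ]

lemma integrable_negp_add_sq (hμ : MemLp id 2 μ) (c : ℝ) :
    Integrable (fun x => negp (x + c) ^ 2) μ := by
  have hc : MemLp (fun x => x + c) 2 μ := hμ.add (memLp_const c)
  refine MemLp.integrable_sq (hc.of_le (by unfold negp; fun_prop) (ae_of_all _ fun x => ?_))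
  simpa [Real.norm_eq_abs, negp] using abs_min_le_max_abs_abs (a := x + c) (b := 0)

lemma sq_mul_measureReal_Iic_le_negSqMoment (hμ : MemLp id 2 μ) {c : ℝ} (hc : c ≤ 0) :
    c ^ 2 * μ.real (Iic 0) ≤ negSqMoment μ c := by
  have hint := integrable_negp_add_sq hμ c
  calc c ^ 2 * μ.real (Iic 0) ≤ ∫ x in Iic 0, negp (x + c) ^ 2 ∂μ := by
        refine setIntegral_ge_of_const_le_real measurableSet_Iic (measure_ne_top _ _)
          (fun x hx => ?_) hint.integrableOn
        rw [mem_Iic] at hx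
        rw [negp, min_eq_left (by linarith)]
        nlinarith
    _ ≤ negSqMoment μ c := setIntegral_le_integral hint (ae_of_all _ fun _ => sq_nonneg _)

lemma tendsto_negSqMoment_atBot (hμ : MemLp id 2 μ) (hpos : 0 < μ (Iic 0)) :
    Tendsto (negSqMoment μ) atBot atTop := by
  have hsq : Tendsto (fun c : ℝ => c ^ 2 * μ.real (Iic 0)) atBot atTop := by
    refine Tendsto.atTop_mul_const (ENNReal.toReal_pos hpos.ne' (measure_ne_top _ _)) ?_
    simpa [Function.comp_def] using
      (tendsto_pow_atTop (α := ℝ) two_ne_zero).comp tendsto_neg_atBot_atTop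
  refine tendsto_atTop_mono' _ ?_ hsq
  filter_upwards [eventually_le_atBot 0] with c hc
  exact sq_mul_measureReal_Iic_le_negSqMoment hμ hc

lemma exists_pos_le_negSqMoment_sub (hμ : MemLp id 2 μ) (hpos : ∀ a, 0 < μ (Iic a))
    {t : ℝ} (ht : 0 < t) (B : ℝ) :
    ∃ g > 0, ∀ x ≤ B, g ≤ negSqMoment μ x - negSqMoment μ (x + t) := by
  refine ⟨t ^ 2 * μ.real (Iic (-B - t)),
    mul_pos (by positivity) (ENNReal.toReal_pos (hpos _).ne' (measure_ne_top _ _)),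
    fun x hx => ?_⟩
  have hint : Integrable (fun y => negp (y + x) ^ 2 - negp (y + (x + t)) ^ 2) μ :=
    (integrable_negp_add_sq hμ x).sub (integrable_negp_add_sq hμ (x + t))
  rw [negSqMoment, negSqMoment, ← integral_sub (integrable_negp_add_sq hμ x)
    (integrable_negp_add_sq hμ (x + t))]
  calc t ^ 2 * μ.real (Iic (-B - t))
      ≤ ∫ y in Iic (-B - t), negp (y + x) ^ 2 - negp (y + (x + t)) ^ 2 ∂μ := by
        refine setIntegral_ge_of_const_le_real measurableSet_Iic (measure_ne_top _ _)
          (fun y hy => ?_) hint.integrableOn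
        rw [mem_Iic] at hy
        rw [negp, negp, min_eq_left (by linarith), min_eq_left (by linarith)]
        nlinarith
    _ ≤ _ := setIntegral_le_integral hint (ae_of_all _ fun y =>
        sub_nonneg.2 (negp_sq_antitone (by linarith)))

end NegSqMoment

instance : IsProbabilityMeasure stdGauss := by
  unfold stdGauss
  infer_instance

lemma stdGauss_Iic_pos (a : ℝ) : 0 < stdGauss (Iic a) := by
  refine pos_iff_ne_zero.2 fun h => ?_
  have := gaussianReal_absolutelyContinuous' 0 one_ne_zero h
  simp at this

lemma isCompact_sum_sq_le_one {ι : Type*} [Fintype ι] :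
    IsCompact {ρ : ι → ℝ | ∑ i, ρ i ^ 2 ≤ 1} := by
  refine (isCompact_univ_pi fun _ => isCompact_Icc (a := -1) (b := 1)).of_isClosed_subset
    (isClosed_le (by fun_prop) continuous_const) fun ρ hρ i _ => ?_
  have hi : ρ i ^ 2 ≤ 1 :=
    (Finset.single_le_sum (fun j _ => sq_nonneg (ρ j)) (Finset.mem_univ i)).trans hρ
  exact abs_le.1 ((sq_le_one_iff_abs_le_one _).1 hi)

section ShiftedInf

variable {α : Type*}

noncomputable def shiftedInf (J : ℝ → ℝ) (p : ℝ) (P : Set α) (d c : α → ℝ) (τ : ℝ) : ℝ :=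
  sInf {v | ∃ i w, i ∈ P ∧ v = p * J (d i - τ - w) + (1 - p) * J w - c i}

lemma sInf_eq_shiftedInf (J : ℝ → ℝ) (p : ℝ) (P : Set α) (a₀ a₁ c : α → ℝ) (δ : ℝ) {q : ℝ}
    (hq : q ≠ 0) :
    sInf {v | ∃ i b, i ∈ P ∧
      v = p * J (a₀ i + (b - δ) / q) + (1 - p) * J (-a₁ i + (-b - 1) / q) - c i} =
    shiftedInf J p P (fun i => a₀ i - a₁ i) c ((1 + δ) / q) := by
  rw [shiftedInf]
  congr 1
  ext v
  constructor
  · rintro ⟨i, b, hi, rfl⟩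
    refine ⟨i, -a₁ i + (-b - 1) / q, hi, ?_⟩
    rw [show a₀ i - a₁ i - (1 + δ) / q - (-a₁ i + (-b - 1) / q) = a₀ i + (b - δ) / q by ring]
  · rintro ⟨i, w, hi, rfl⟩
    refine ⟨i, -q * (w + a₁ i) - 1, hi, ?_⟩
    rw [show -a₁ i + (-(-q * (w + a₁ i) - 1) - 1) / q = w by field_simp; ring,
      show a₀ i + (-q * (w + a₁ i) - 1 - δ) / q = a₀ i - a₁ i - (1 + δ) / q - w by
        field_simp; ring]

theorem strictMono_shiftedInf {J : ℝ → ℝ} (hJ0 : ∀ x, 0 ≤ J x)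
    (hJ : Tendsto J atBot atTop) (hgap : ∀ t > 0, ∀ B, ∃ g > 0, ∀ x ≤ B, g ≤ J x - J (x + t))
    {p : ℝ} (hp0 : 0 < p) (hp1 : p < 1) {P : Set α} (hP : P.Nonempty) {d c : α → ℝ}
    (hd : BddAbove (d '' P)) (hc : BddAbove (c '' P)) :
    StrictMono (shiftedInf J p P d c) := by
  intro τ₁ τ₂ hτ
  obtain ⟨D, hD⟩ := hd
  obtain ⟨C, hC⟩ := hc
  simp only [mem_upperBounds, forall_mem_image] at hD hC
  have hne : ∀ τ, {v | ∃ i w, i ∈ P ∧ v = p * J (d i - τ - w) + (1 - p) * J w - c i}.Nonempty :=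
    fun τ => ⟨_, hP.some, 0, hP.some_mem, rfl⟩
  have hbdd : ∀ τ, BddBelow
      {v | ∃ i w, i ∈ P ∧ v = p * J (d i - τ - w) + (1 - p) * J w - c i} := by
    intro τ
    refine ⟨-C, ?_⟩
    rintro _ ⟨i, w, hi, rfl⟩
    nlinarith [hJ0 (d i - τ - w), hJ0 w, hC hi]
  set Φ₂ := shiftedInf J p P d c τ₂
  obtain ⟨W, hW⟩ := tendsto_atBot_atTop.1 hJ ((Φ₂ + 1 + C) / (1 - p) + 1)
  obtain ⟨g, hg, hgain⟩ := hgap (τ₂ - τ₁) (sub_pos.2 hτ) (D - τ₂ - W)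
  -- `ε ≤ 1` keeps `(i, w)` within the bound `W`, and `ε ≤ p g` lets the gain beat the slack `ε`.
  obtain ⟨_, ⟨i, w, hi, rfl⟩, hv⟩ :=
    Real.lt_sInf_add_pos (hne τ₂) (lt_min one_pos (mul_pos hp0 hg))
  change _ < Φ₂ + _ at hv
  have hw : W < w := by
    by_contra! hw
    have hJw := hW w hw
    have hK : (1 - p) * J w ≤ Φ₂ + 1 + C := by
      nlinarith [hJ0 (d i - τ₂ - w), hC hi, min_le_left 1 (p * g)]
    rw [← le_div_iff₀' (by linarith)] at hK
    linarith
  have hx := hgain (d i - τ₂ - w) (by linarith [hD hi])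
  rw [show d i - τ₂ - w + (τ₂ - τ₁) = d i - τ₁ - w by ring] at hx
  calc shiftedInf J p P d c τ₁ ≤ p * J (d i - τ₁ - w) + (1 - p) * J w - c i :=
        csInf_le (hbdd τ₁) ⟨i, w, hi, rfl⟩
    _ ≤ p * J (d i - τ₂ - w) + (1 - p) * J w - c i - p * g := by nlinarith
    _ < Φ₂ := by linarith [min_le_right 1 (p * g)]

end ShiftedInf

theorem stmt14_general (δ γ pp : ℝ) (hδ : 0 < δ) (hpp : 0 < pp) (hpp1 : pp < 1)
    (r : ℕ)
    (s : Fin r → ℝ)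
    (V : Matrix (Fin 2) (Fin r) ℝ)
    (η : ℝ → (Fin r → ℝ) → ℝ → ℝ)
    (hη : ∀ (q : ℝ) (ρ : Fin r → ℝ) (b : ℝ), η q ρ b =
      pp * ∫ g, negp (g + (V.mulVec ((Matrix.diagonal s).mulVec ρ)) 0 + (b - δ) / q) ^ 2 ∂stdGauss
      + (1 - pp) * ∫ g, negp (g - (V.mulVec ((Matrix.diagonal s).mulVec ρ)) 1 + (-b - 1) / q) ^ 2 ∂stdGauss
      - (1 - ∑ i, ρ i ^ 2) * γ)
    (f : ℝ → ℝ)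
    (hf : ∀ q, f q = sInf {v : ℝ | ∃ (ρ : Fin r → ℝ) (b : ℝ), (∑ i, ρ i ^ 2) ≤ 1 ∧ v = η q ρ b}) :
    StrictAntiOn f (Set.Ioi 0) := by
  set J := negSqMoment stdGauss
  set A : (Fin r → ℝ) → Fin 2 → ℝ := fun ρ => V *ᵥ (diagonal s *ᵥ ρ)
  have hηJ : ∀ q ρ b, η q ρ b = pp * J (A ρ 0 + (b - δ) / q)
      + (1 - pp) * J (-A ρ 1 + (-b - 1) / q) - (1 - ∑ i, ρ i ^ 2) * γ := by
    intro q ρ b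
    simp only [hη, J, A, negSqMoment, sub_eq_add_neg, add_assoc]
  have hf' : ∀ q ≠ 0, f q = shiftedInf J pp {ρ | ∑ i, ρ i ^ 2 ≤ 1} (fun ρ => A ρ 0 - A ρ 1)
      (fun ρ => (1 - ∑ i, ρ i ^ 2) * γ) ((1 + δ) / q) := fun q hq => by
    rw [hf, ← sInf_eq_shiftedInf J pp _ (A · 0) (A · 1) _ δ hq]
    simp only [hηJ, mem_ofPred_eq]
  have hcont₁ : Continuous fun ρ => A ρ 0 - A ρ 1 := by fun_prop
  have hcont₂ : Continuous fun ρ : Fin r → ℝ => (1 - ∑ i, ρ i ^ 2) * γ := by fun_prop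
  have hΦ : StrictMono (shiftedInf J pp {ρ | ∑ i, ρ i ^ 2 ≤ 1} (fun ρ => A ρ 0 - A ρ 1)
      (fun ρ => (1 - ∑ i, ρ i ^ 2) * γ)) :=
    strictMono_shiftedInf negSqMoment_nonneg
      (tendsto_negSqMoment_atBot (memLp_id_gaussianReal 2) (stdGauss_Iic_pos 0))
      (fun _ ht => exists_pos_le_negSqMoment_sub (memLp_id_gaussianReal 2) stdGauss_Iic_pos ht)
      hpp hpp1 ⟨0, by simp⟩
      (isCompact_sum_sq_le_one.bddAbove_image hcont₁.continuousOn)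
      (isCompact_sum_sq_le_one.bddAbove_image hcont₂.continuousOn)
  intro q₁ hq₁ q₂ hq₂ hq
  rw [hf' q₁ (ne_of_gt hq₁), hf' q₂ (ne_of_gt hq₂)]
  exact hΦ (div_lt_div_of_pos_left (by linarith) hq₁ hq)

theorem stmt14 (δ γ pp : ℝ) (hδ : 0 < δ) (hγ : 0 < γ) (hpp : 0 < pp) (hpp1 : pp < 1)
    (r : ℕ) (hr : r = 1 ∨ r = 2)
    (s : Fin r → ℝ) (hs : ∀ i, 0 < s i)
    (V : Matrix (Fin 2) (Fin r) ℝ) (hV : Vᵀ * V = 1)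
    (η : ℝ → (Fin r → ℝ) → ℝ → ℝ)
    (hη : ∀ (q : ℝ) (ρ : Fin r → ℝ) (b : ℝ), η q ρ b =
      pp * ∫ g, negp (g + (V.mulVec ((Matrix.diagonal s).mulVec ρ)) 0 + (b - δ) / q) ^ 2 ∂stdGauss
      + (1 - pp) * ∫ g, negp (g - (V.mulVec ((Matrix.diagonal s).mulVec ρ)) 1 + (-b - 1) / q) ^ 2 ∂stdGauss
      - (1 - ∑ i, ρ i ^ 2) * γ)
    (f : ℝ → ℝ)
    (hf : ∀ q, f q = sInf {v : ℝ | ∃ (ρ : Fin r → ℝ) (b : ℝ), (∑ i, ρ i ^ 2) ≤ 1 ∧ v = η q ρ b}) :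
    StrictAntiOn f (Set.Ioi 0) :=
  stmt14_general δ γ pp hδ hpp hpp1 r s V η hη f hf
end

section
/- Fix δ > 0, γ > 0, q > 0, π ∈ (0,1), r ∈ {1,2}, an r×r diagonal positive-definite matrix S, and V ∈ ℝ^{2×r} with VᵀV = I_r. Let G ∼ N(0,1), Y an independent random sign with P(Y=+1) = π, E_Y := e₁·1{Y=+1} − e₂·1{Y=−1}, Δ_Y := δ·1{Y=+1} + 1·1{Y=−1}. Then the function (ρ, b) ↦ E[( G + E_YᵀVSρ + (bY − Δ_Y)/q )₋²] + γ‖ρ‖₂², on ℝ^r × ℝ, is jointly strictly convex. Consequently, for each fixed q > 0, the minimizer (ρ, b) of η_δ(q, ρ, b) := E[( G + E_YᵀVSρ + (bY − Δ_Y)/q )₋²] − (1 − ‖ρ‖₂²)γ over {ρ : ‖ρ‖₂ ≤ 1} × ℝ is unique whenever it exists. -/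
/-!
Both the truncated square `x ↦ (x)₋²` and its Gaussian smoothing `t ↦ E[(G + t)₋²]` are convex;
the smoothing is strictly convex because, for `t₁ ≠ t₂`, the event that `G + t₁` and `G + t₂`
are both negative has positive probability, and there `(x)₋² = x²` is strictly convex.
The objective is a positive mixture of this function along two affine forms in `(ρ, b)` plus
`γ‖ρ‖²`: two points with different `ρ` are separated by `γ‖ρ‖²`, two points with the same `ρ`
by the first affine form, whose coefficient of `b` is `1/q ≠ 0`. A strictly convex function has
at most one minimizer on the convex set `{‖ρ‖ ≤ 1} × ℝ`.
-/

open MeasureTheory ProbabilityTheory Matrix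

open Set

theorem MeasureTheory.integral_lt_integral_of_ae_le_of_measure_setOfPred_lt_ne_zero
    {α : Type*} [MeasurableSpace α] {μ : Measure α} {f g : α → ℝ}
    (hf : Integrable f μ) (hg : Integrable g μ) (hle : f ≤ᵐ[μ] g)
    (hlt : μ {x | f x < g x} ≠ 0) : ∫ x, f x ∂μ < ∫ x, g x ∂μ := by
  rw [← sub_pos, ← integral_sub hg hf, integral_pos_iff_support_of_nonneg_ae
    (hle.mono fun _ => sub_nonneg.2) (hg.sub hf)]
  exact pos_iff_ne_zero.2 (mt (measure_mono_null fun x hx => (sub_pos.2 hx).ne') hlt)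

theorem StrictConvexOn.const_mul {E : Type*} [AddCommMonoid E] [SMul ℝ E] {s : Set E}
    {f : E → ℝ} {c : ℝ} (hf : StrictConvexOn ℝ s f) (hc : 0 < c) :
    StrictConvexOn ℝ s fun x => c * f x :=
  ⟨hf.1, fun x hx y hy hxy a b ha hb hab => by
    have := mul_lt_mul_of_pos_left (hf.2 hx hy hxy ha hb hab) hc
    simp only [smul_eq_mul] at this ⊢
    linarith⟩

theorem StrictConvexOn.sum_comp_apply {ι : Type*} [Fintype ι] {φ : ℝ → ℝ}
    (hφ : StrictConvexOn ℝ univ φ) : StrictConvexOn ℝ univ fun x : ι → ℝ => ∑ i, φ (x i) := by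
  refine ⟨convex_univ, fun x _ y _ hxy a b ha hb hab => ?_⟩
  obtain ⟨i, hi⟩ := Function.ne_iff.1 hxy
  simp only [Pi.add_apply, Pi.smul_apply, smul_eq_mul, Finset.mul_sum, ← Finset.sum_add_distrib]
  exact Finset.sum_lt_sum (fun j _ => hφ.convexOn.2 trivial trivial ha.le hb.le hab)
    ⟨i, Finset.mem_univ _, hφ.2 trivial trivial hi ha hb hab⟩

theorem strictConvexOn_sum_sq {ι : Type*} [Fintype ι] :
    StrictConvexOn ℝ univ fun x : ι → ℝ => ∑ i, x i ^ 2 :=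
  (Even.strictConvexOn_pow even_two two_ne_zero).sum_comp_apply

theorem StrictConvexOn.comp_affineMap_add_comp_fst {E F G : Type*} [AddCommGroup E] [Module ℝ E]
    [AddCommGroup F] [Module ℝ F] [AddCommGroup G] [Module ℝ G] {f : G → ℝ} {ψ : E → ℝ}
    (hf : StrictConvexOn ℝ univ f) (hψ : StrictConvexOn ℝ univ ψ) (A : E × F →ᵃ[ℝ] G)
    (hA : ∀ x, Function.Injective fun y => A (x, y)) :
    StrictConvexOn ℝ univ fun p : E × F => f (A p) + ψ p.1 := by
  refine ⟨convex_univ, ?_⟩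
  rintro ⟨x, s⟩ - ⟨y, t⟩ - hne a b ha hb hab
  simp only [Prod.fst_add, Prod.smul_fst, Convex.combo_affine_apply hab]
  by_cases hxy : x = y
  · subst hxy
    have hst : A (x, s) ≠ A (x, t) := fun h => hne (by rw [hA x h])
    have h₁ := hf.2 trivial trivial hst ha hb hab
    have h₂ := hψ.convexOn.2 (mem_univ x) (mem_univ x) ha.le hb.le hab
    simp only [smul_eq_mul] at h₁ h₂ ⊢
    linarith
  · have h₁ := hf.convexOn.2 (mem_univ (A (x, s))) (mem_univ (A (y, t))) ha.le hb.le hab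
    have h₂ := hψ.2 trivial trivial hxy ha hb hab
    simp only [smul_eq_mul] at h₁ h₂ ⊢
    linarith

theorem strictConvexOn_mixture_comp_affine_add {E : Type*} [AddCommGroup E] [Module ℝ E]
    {F : ℝ → ℝ} {ψ : E → ℝ} (hF : StrictConvexOn ℝ univ F) (hψ : StrictConvexOn ℝ univ ψ)
    {w : ℝ} (hw₀ : 0 < w) (hw₁ : w < 1) (ℓ₀ ℓ₁ : E →ₗ[ℝ] ℝ) {c₀ : ℝ} (hc₀ : c₀ ≠ 0)
    (c₁ d₀ d₁ : ℝ) :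
    StrictConvexOn ℝ univ fun p : E × ℝ =>
      w * F (ℓ₀ p.1 + c₀ * p.2 + d₀) + (1 - w) * F (ℓ₁ p.1 + c₁ * p.2 + d₁) + ψ p.1 := by
  let A (ℓ : E →ₗ[ℝ] ℝ) (c d : ℝ) : E × ℝ →ᵃ[ℝ] ℝ :=
    (ℓ.coprod (c • LinearMap.id)).toAffineMap + AffineMap.const ℝ _ d
  have hA : ∀ ℓ c d p, A ℓ c d p = ℓ p.1 + c * p.2 + d := fun _ _ _ _ => rfl
  have hA₀ : ∀ x, Function.Injective fun y => A ℓ₀ c₀ d₀ (x, y) :=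
    fun x y y' h => by simpa [hA, hc₀] using h
  have h₀ := (hF.const_mul hw₀).comp_affineMap_add_comp_fst hψ (A ℓ₀ c₀ d₀) hA₀
  have h₁ := (hF.convexOn.comp_affineMap (A ℓ₁ c₁ d₁)).smul (sub_nonneg.2 hw₁.le)
  refine (h₀.add_convexOn h₁).congr fun p _ => ?_
  simp only [Pi.add_apply, Function.comp_apply, smul_eq_mul, hA]
  ring

theorem convex_setOf_sum_sq_fst_le {ι F : Type*} [Fintype ι] [AddCommGroup F] [Module ℝ F]
    (R : ℝ) : Convex ℝ {p : (ι → ℝ) × F | ∑ i, p.1 i ^ 2 ≤ R} := by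
  simpa using (strictConvexOn_sum_sq.convexOn.comp_linearMap (LinearMap.fst ℝ _ F)).convex_le R

theorem negp_sq_of_nonpos {x : ℝ} (hx : x ≤ 0) : negp x ^ 2 = x ^ 2 := by
  rw [negp, min_eq_left hx]

theorem continuous_negp : Continuous negp := continuous_id.min continuous_const

theorem abs_negp_le (x : ℝ) : |negp x| ≤ |x| := by
  rcases le_total x 0 with hx | hx
  · rw [negp, min_eq_left hx]
  · rw [negp, min_eq_right hx, abs_zero]; exact abs_nonneg x

theorem convexOn_negp_sq : ConvexOn ℝ univ fun x => negp x ^ 2 := by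
  have h : ConvexOn ℝ univ fun x => -negp x :=
    ((concaveOn_id convex_univ).inf (concaveOn_const 0 convex_univ)).neg
  exact (h.pow (fun x _ => neg_nonneg.2 (min_le_right x 0)) 2).congr fun x _ => neg_sq (negp x)

theorem strictConvexOn_negp_sq : StrictConvexOn ℝ (Iic 0) fun x => negp x ^ 2 :=
  ((Even.strictConvexOn_pow even_two two_ne_zero).subset (subset_univ _) (convex_Iic 0)).congr
    fun _ hx => (negp_sq_of_nonpos hx).symm

theorem integrable_negp_sq_comp_add {μ : Measure ℝ} [IsFiniteMeasure μ] (hμ : MemLp id 2 μ)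
    (t : ℝ) : Integrable (fun g => negp (g + t) ^ 2) μ := by
  have hshift : MemLp (fun g => g + t) 2 μ := hμ.add (memLp_const t)
  refine (hshift.of_le ?_ (ae_of_all _ fun g => abs_negp_le (g + t))).integrable_sq
  exact (continuous_negp.comp (continuous_add_const t)).aestronglyMeasurable

theorem strictConvexOn_integral_comp_add {μ : Measure ℝ} {φ : ℝ → ℝ} {c : ℝ}
    (hφ : ConvexOn ℝ univ φ) (hφc : StrictConvexOn ℝ (Iic c) φ)
    (hint : ∀ t, Integrable (fun g => φ (g + t)) μ) (hμ : ∀ x, μ (Iio x) ≠ 0) :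
    StrictConvexOn ℝ univ fun t => ∫ g, φ (g + t) ∂μ := by
  refine ⟨convex_univ, fun x _ y _ hxy a b ha hb hab => ?_⟩
  have hcomb : ∀ g, g + (a * x + b * y) = a * (g + x) + b * (g + y) := fun g => by
    linear_combination (-g) * hab
  simp only [smul_eq_mul, ← integral_const_mul]
  rw [← integral_add ((hint x).const_mul a) ((hint y).const_mul b)]
  refine integral_lt_integral_of_ae_le_of_measure_setOfPred_lt_ne_zero (hint _)
    (((hint x).const_mul a).add ((hint y).const_mul b)) (ae_of_all _ fun g => ?_) ?_
  · simpa [hcomb] using hφ.2 (mem_univ (g + x)) (mem_univ (g + y)) ha.le hb.le hab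
  refine fun h => hμ (c - max x y) (measure_mono_null (fun g hg => ?_) h)
  rw [mem_Iio] at hg
  have hgx : g + x ∈ Iic c := by rw [mem_Iic]; linarith [le_max_left x y]
  have hgy : g + y ∈ Iic c := by rw [mem_Iic]; linarith [le_max_right x y]
  have hne : g + x ≠ g + y := fun h => hxy (add_left_cancel h)
  simpa [hcomb] using hφc.2 hgx hgy hne ha hb hab

theorem strictConvexOn_integral_negp_sq_stdGauss :
    StrictConvexOn ℝ univ fun t => ∫ g, negp (g + t) ^ 2 ∂stdGauss := by
  have hvol : volume ≪ gaussianReal 0 1 := gaussianReal_absolutelyContinuous' 0 one_ne_zero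
  unfold stdGauss
  refine strictConvexOn_integral_comp_add convexOn_negp_sq strictConvexOn_negp_sq
    (integrable_negp_sq_comp_add (memLp_id_gaussianReal 2)) fun x h => ?_
  simpa using hvol h

theorem stmt16_general (δ γ q pp : ℝ) (hγ : 0 < γ) (hq : 0 < q)
    (hpp : 0 < pp) (hpp1 : pp < 1)
    (r : ℕ)
    (s : Fin r → ℝ)
    (V : Matrix (Fin 2) (Fin r) ℝ)
    (Ex : (Fin r → ℝ) → ℝ → ℝ)
    (hEx : ∀ (ρ : Fin r → ℝ) (b : ℝ), Ex ρ b =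
      pp * ∫ g, negp (g + (V.mulVec ((Matrix.diagonal s).mulVec ρ)) 0 + (b - δ) / q) ^ 2 ∂stdGauss
      + (1 - pp) * ∫ g, negp (g - (V.mulVec ((Matrix.diagonal s).mulVec ρ)) 1 + (-b - 1) / q) ^ 2 ∂stdGauss) :
    StrictConvexOn ℝ Set.univ
      (fun p : (Fin r → ℝ) × ℝ => Ex p.1 p.2 + γ * ∑ i, p.1 i ^ 2) ∧
    ∀ p₁ p₂ : (Fin r → ℝ) × ℝ,
      (∑ i, p₁.1 i ^ 2) ≤ 1 → (∑ i, p₂.1 i ^ 2) ≤ 1 →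
      (∀ p : (Fin r → ℝ) × ℝ, (∑ i, p.1 i ^ 2) ≤ 1 →
        Ex p₁.1 p₁.2 - (1 - ∑ i, p₁.1 i ^ 2) * γ ≤ Ex p.1 p.2 - (1 - ∑ i, p.1 i ^ 2) * γ) →
      (∀ p : (Fin r → ℝ) × ℝ, (∑ i, p.1 i ^ 2) ≤ 1 →
        Ex p₂.1 p₂.2 - (1 - ∑ i, p₂.1 i ^ 2) * γ ≤ Ex p.1 p.2 - (1 - ∑ i, p.1 i ^ 2) * γ) →
      p₁ = p₂ := by
  let L (i : Fin 2) : (Fin r → ℝ) →ₗ[ℝ] ℝ :=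
    LinearMap.proj i ∘ₗ V.mulVecLin ∘ₗ (diagonal s).mulVecLin
  have hstrict : StrictConvexOn ℝ univ
      fun p : (Fin r → ℝ) × ℝ => Ex p.1 p.2 + γ * ∑ i, p.1 i ^ 2 := by
    -- the Gaussian arguments are `L 0 ρ + b / q - δ / q` and `-L 1 ρ - b / q - 1 / q`
    refine (strictConvexOn_mixture_comp_affine_add strictConvexOn_integral_negp_sq_stdGauss
      (strictConvexOn_sum_sq.const_mul hγ) hpp hpp1 (L 0) (-L 1) (inv_ne_zero hq.ne')
      (-q⁻¹) (-δ / q) (-q⁻¹)).congr fun ⟨ρ, b⟩ _ => ?_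
    dsimp only
    rw [hEx]
    congr 3 <;> (congr 1; funext g; congr 2; simp [L]; ring)
  refine ⟨hstrict, fun p₁ p₂ h₁ h₂ hmin₁ hmin₂ => ?_⟩
  refine (hstrict.subset (subset_univ _) (convex_setOf_sum_sq_fst_le 1)).eq_of_isMinOn
    (isMinOn_iff.2 fun p hp => ?_) (isMinOn_iff.2 fun p hp => ?_) h₁ h₂
  · linarith [hmin₁ p hp]
  · linarith [hmin₂ p hp]

theorem stmt16 (δ γ q pp : ℝ) (hδ : 0 < δ) (hγ : 0 < γ) (hq : 0 < q)
    (hpp : 0 < pp) (hpp1 : pp < 1)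
    (r : ℕ) (hr : r = 1 ∨ r = 2)
    (s : Fin r → ℝ) (hs : ∀ i, 0 < s i)
    (V : Matrix (Fin 2) (Fin r) ℝ) (hV : Vᵀ * V = 1)
    (Ex : (Fin r → ℝ) → ℝ → ℝ)
    (hEx : ∀ (ρ : Fin r → ℝ) (b : ℝ), Ex ρ b =
      pp * ∫ g, negp (g + (V.mulVec ((Matrix.diagonal s).mulVec ρ)) 0 + (b - δ) / q) ^ 2 ∂stdGauss
      + (1 - pp) * ∫ g, negp (g - (V.mulVec ((Matrix.diagonal s).mulVec ρ)) 1 + (-b - 1) / q) ^ 2 ∂stdGauss) :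
    StrictConvexOn ℝ Set.univ
      (fun p : (Fin r → ℝ) × ℝ => Ex p.1 p.2 + γ * ∑ i, p.1 i ^ 2) ∧
    ∀ p₁ p₂ : (Fin r → ℝ) × ℝ,
      (∑ i, p₁.1 i ^ 2) ≤ 1 → (∑ i, p₂.1 i ^ 2) ≤ 1 →
      (∀ p : (Fin r → ℝ) × ℝ, (∑ i, p.1 i ^ 2) ≤ 1 →
        Ex p₁.1 p₁.2 - (1 - ∑ i, p₁.1 i ^ 2) * γ ≤ Ex p.1 p.2 - (1 - ∑ i, p.1 i ^ 2) * γ) →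
      (∀ p : (Fin r → ℝ) × ℝ, (∑ i, p.1 i ^ 2) ≤ 1 →
        Ex p₂.1 p₂.2 - (1 - ∑ i, p₂.1 i ^ 2) * γ ≤ Ex p.1 p.2 - (1 - ∑ i, p.1 i ^ 2) * γ) →
      p₁ = p₂ :=
  stmt16_general δ γ q pp hγ hq hpp hpp1 r s V Ex hEx
end
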